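/- arXiv:2007.12962 — 2 statements merged into one kernel-verified Lean document; each statement's English description precedes it below -/
import Mathlib

section
/- Let f : ℝ → ℂ be such that φ ↦ f((1/2)tan(φ/2)) has an absolutely convergent Fourier series on (-π, π) and f(x) ≠ 0 for all x ∈ ℝ. Then φ ↦ 1/f((1/2)tan(φ/2)) also has an absolutely convergent Fourier series (Wiener's lemma applied in this setting). -/
/-!
Wiener's lemma via Gelfand theory. Absolutely summable sequences on ℤ form a commutative complex
Banach algebra ℓ¹(ℤ) under convolution, and summing a Fourier series at a point φ is a character
of it. Conversely, a character χ is determined by its values on the unit vectors δₙ; these form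
a character of ℤ bounded by ‖δₙ‖ = 1, hence χ(δₙ) = e^{inθ}, so every character is evaluation of
the Fourier series at some θ. If the Fourier series of c vanishes nowhere, no character kills c,
so c has an inverse d in ℓ¹(ℤ), and evaluating c * d = 1 at φ shows that d is the coefficient
sequence of 1/f((1/2)tan(φ/2)).
-/

open Complex

noncomputable section

theorem summable_norm_mul_norm {ι κ : Type*} {a : ι → ℂ} {b : κ → ℂ}
    (ha : Summable fun n => ‖a n‖) (hb : Summable fun n => ‖b n‖) :
    Summable fun p : ι × κ => ‖a p.1‖ * ‖b p.2‖ :=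
  ha.mul_of_nonneg hb (fun _ => norm_nonneg _) fun _ => norm_nonneg _

section Antidiagonal

variable {G : Type*} [AddCommGroup G]

def antidiagonalEquiv : G × G ≃ G × G where
  toFun p := (p.2, p.1 - p.2)
  invFun p := (p.1 + p.2, p.1)
  left_inv p := by simp
  right_inv p := by simp

variable {E : Type*} [NormedAddCommGroup E] [CompleteSpace E] {F : G × G → E}

theorem Summable.antidiagonal_fiber (hF : Summable F) (n : G) : Summable fun k => F (k, n - k) :=
  (antidiagonalEquiv.summable_iff.2 hF).prod_factor n

theorem Summable.antidiagonal (hF : Summable F) : Summable fun n => ∑' k, F (k, n - k) :=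
  (antidiagonalEquiv.summable_iff.2 hF).prod

theorem Summable.tsum_antidiagonal (hF : Summable F) :
    ∑' p, F p = ∑' n, ∑' k, F (k, n - k) := by
  rw [← antidiagonalEquiv.tsum_eq F]
  exact (antidiagonalEquiv.summable_iff.2 hF).tsum_prod

end Antidiagonal

def expAddChar (θ : ℝ) : AddChar ℤ ℂ where
  toFun n := exp (I * n * θ)
  map_zero_eq_one' := by simp
  map_add_eq_mul' m n := by
    rw [← exp_add]
    push_cast
    ring_nf

theorem expAddChar_apply (θ : ℝ) (n : ℤ) : expAddChar θ n = exp (I * n * θ) := rfl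

theorem norm_expAddChar (θ : ℝ) (n : ℤ) : ‖expAddChar θ n‖ = 1 := by
  rw [expAddChar_apply, show I * n * θ = ((n * θ : ℝ) : ℂ) * I by push_cast; ring]
  exact norm_exp_ofReal_mul_I _

theorem AddChar.exists_eq_expAddChar (ψ : AddChar ℤ ℂ) (hψ : ‖ψ 1‖ = 1) :
    ∃ θ : ℝ, ψ = expAddChar θ := by
  refine ⟨arg (ψ 1), AddChar.ext _ _ fun n => ?_⟩
  calc ψ n = (‖ψ 1‖ * exp (arg (ψ 1) * I)) ^ n := by
        rw [norm_mul_exp_arg_mul_I]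
        simpa using ψ.map_zsmul_eq_zpow n 1
    _ = expAddChar (arg (ψ 1)) n := by
        rw [hψ, ofReal_one, one_mul, ← exp_int_mul, expAddChar_apply]
        ring_nf

namespace L1GroupAlgebra

variable {G : Type*} [AddCommGroup G]

def conv (a b : G → ℂ) (n : G) : ℂ := ∑' k, a k * b (n - k)

variable {a b c : G → ℂ}

theorem summable_conv_apply (ha : Summable fun n => ‖a n‖) (hb : Summable fun n => ‖b n‖)
    (n : G) : Summable fun k => a k * b (n - k) :=
  Summable.of_norm <| by
    simpa only [norm_mul] using (summable_norm_mul_norm ha hb).antidiagonal_fiber n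

theorem summable_norm_conv (ha : Summable fun n => ‖a n‖) (hb : Summable fun n => ‖b n‖) :
    Summable fun n => ‖conv a b n‖ := by
  refine .of_nonneg_of_le (fun n => norm_nonneg _) (fun n => ?_)
    (summable_norm_mul_norm ha hb).antidiagonal
  simpa only [conv, norm_mul] using norm_tsum_le_tsum_norm (summable_conv_apply ha hb n).norm

theorem tsum_norm_conv_le (ha : Summable fun n => ‖a n‖) (hb : Summable fun n => ‖b n‖) :
    ∑' n, ‖conv a b n‖ ≤ (∑' n, ‖a n‖) * ∑' n, ‖b n‖ :=
  calc ∑' n, ‖conv a b n‖ ≤ ∑' n, ∑' k, ‖a k‖ * ‖b (n - k)‖ := by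
        refine (summable_norm_conv ha hb).tsum_le_tsum (fun n => ?_)
          (summable_norm_mul_norm ha hb).antidiagonal
        simpa only [conv, norm_mul] using norm_tsum_le_tsum_norm (summable_conv_apply ha hb n).norm
    _ = ∑' p : G × G, ‖a p.1‖ * ‖b p.2‖ :=
        (summable_norm_mul_norm ha hb).tsum_antidiagonal.symm
    _ = (∑' n, ‖a n‖) * ∑' n, ‖b n‖ :=
        (ha.tsum_mul_tsum hb (summable_norm_mul_norm ha hb)).symm

theorem conv_comm (a b : G → ℂ) : conv a b = conv b a := by
  ext n
  rw [conv, ← (Equiv.subLeft n).tsum_eq]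
  simp [conv, mul_comm]

theorem conv_add (ha : Summable fun n => ‖a n‖) (hb : Summable fun n => ‖b n‖)
    (hc : Summable fun n => ‖c n‖) : conv a (b + c) = conv a b + conv a c := by
  ext n
  simp only [conv, Pi.add_apply, mul_add]
  exact (summable_conv_apply ha hb n).tsum_add (summable_conv_apply ha hc n)

theorem smul_conv (z : ℂ) (a b : G → ℂ) : conv (z • a) b = z • conv a b := by
  ext n
  simp only [conv, Pi.smul_apply, smul_eq_mul, mul_assoc, tsum_mul_left]

theorem zero_conv (b : G → ℂ) : conv 0 b = 0 := by
  ext n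
  simp [conv]

theorem conv_single [DecidableEq G] (a : G → ℂ) (g : G) (z : ℂ) (n : G) :
    conv a (Pi.single g z) n = a (n - g) * z := by
  rw [conv, tsum_eq_single (n - g)]
  · simp
  · intro k hk
    rw [Pi.single_apply, if_neg (by rintro h; exact hk (by rw [← h]; abel)), mul_zero]

theorem conv_assoc (ha : Summable fun n => ‖a n‖) (hb : Summable fun n => ‖b n‖)
    (hc : Summable fun n => ‖c n‖) : conv (conv a b) c = conv a (conv b c) := by
  ext n
  set H : G × G → ℂ := fun p => a p.1 * b p.2 * c (n - (p.1 + p.2))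
  have hH : Summable H := by
    refine .of_norm <| .of_nonneg_of_le (fun p => norm_nonneg _) (fun p => ?_)
      ((summable_norm_mul_norm ha hb).mul_right (∑' m, ‖c m‖))
    rw [norm_mul, norm_mul]
    exact mul_le_mul_of_nonneg_left (hc.le_tsum _ fun m _ => norm_nonneg _) (by positivity)
  calc conv (conv a b) c n = ∑' j, ∑' k, H (k, j - k) := by
        simp only [conv, H, add_sub_cancel, ← tsum_mul_right]
    _ = ∑' k, ∑' m, H (k, m) := by rw [← hH.tsum_antidiagonal, hH.tsum_prod]
    _ = conv a (conv b c) n := by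
        simp only [conv, H, sub_add_eq_sub_sub, ← tsum_mul_left, mul_assoc]

theorem summable_norm_mul_addChar (ha : Summable fun n => ‖a n‖) {ψ : AddChar G ℂ}
    (hψ : ∀ g, ‖ψ g‖ ≤ 1) : Summable fun g => ‖a g * ψ g‖ :=
  .of_nonneg_of_le (fun g => norm_nonneg _)
    (fun g => by simpa [norm_mul] using mul_le_mul_of_nonneg_left (hψ g) (norm_nonneg (a g))) ha

theorem tsum_conv_mul_addChar (ha : Summable fun n => ‖a n‖) (hb : Summable fun n => ‖b n‖)
    (ψ : AddChar G ℂ) (hψ : ∀ g, ‖ψ g‖ ≤ 1) :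
    ∑' n, conv a b n * ψ n = (∑' n, a n * ψ n) * ∑' n, b n * ψ n := by
  have haψ := summable_norm_mul_addChar ha hψ
  have hbψ := summable_norm_mul_addChar hb hψ
  have hprod : Summable fun p : G × G => a p.1 * b p.2 * ψ (p.1 + p.2) := by
    simpa only [AddChar.map_add_eq_mul, mul_mul_mul_comm] using
      summable_mul_of_summable_norm haψ hbψ
  rw [tsum_mul_tsum_of_summable_norm haψ hbψ]
  calc ∑' n, conv a b n * ψ n = ∑' n, ∑' k, a k * b (n - k) * ψ (k + (n - k)) := by
        simp only [conv, add_sub_cancel, ← tsum_mul_right]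
    _ = ∑' p : G × G, a p.1 * ψ p.1 * (b p.2 * ψ p.2) := by
        rw [← hprod.tsum_antidiagonal]
        simp only [AddChar.map_add_eq_mul, mul_mul_mul_comm]

end L1GroupAlgebra

abbrev L1GroupAlgebra (G : Type*) : Type _ := lp (fun _ : G => ℂ) 1

namespace L1GroupAlgebra

variable {G : Type*}

theorem summable_norm (a : L1GroupAlgebra G) : Summable fun n => ‖a n‖ := by
  simpa using (lp.memℓp a).summable (p := 1) (by norm_num)

theorem memℓp_one {a : G → ℂ} (ha : Summable fun n => ‖a n‖) : Memℓp a 1 :=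
  (memℓp_gen_iff (by norm_num)).2 (by simpa using ha)

theorem norm_eq_tsum (a : L1GroupAlgebra G) : ‖a‖ = ∑' n, ‖a n‖ := by
  simpa using lp.norm_eq_tsum_rpow (p := 1) (by norm_num) a

section DecidableEq

variable [DecidableEq G]

def single (g : G) : L1GroupAlgebra G := lp.single 1 g 1

theorem coe_single (g : G) : ⇑(single g) = Pi.single g 1 := lp.coeFn_single _ _ _

theorem norm_single (g : G) : ‖single g‖ = 1 :=
  (lp.norm_single (p := 1) (E := fun _ : G => ℂ) (by norm_num) g 1).trans norm_one

end DecidableEq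

variable [AddCommGroup G]

instance : Mul (L1GroupAlgebra G) :=
  ⟨fun a b => ⟨conv a b, memℓp_one (summable_norm_conv a.summable_norm b.summable_norm)⟩⟩

@[simp]
theorem coe_mul (a b : L1GroupAlgebra G) : ⇑(a * b) = conv a b := rfl

theorem summable_mul_addChar (a : L1GroupAlgebra G) {ψ : AddChar G ℂ}
    (hψ : ∀ g, ‖ψ g‖ ≤ 1) : Summable fun g => a g * ψ g :=
  (summable_norm_mul_addChar a.summable_norm hψ).of_norm

variable [DecidableEq G]

instance : One (L1GroupAlgebra G) := ⟨single 0⟩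

theorem coe_one : ⇑(1 : L1GroupAlgebra G) = Pi.single 0 1 := coe_single 0

instance : CommRing (L1GroupAlgebra G) where
  mul_assoc a b c := lp.ext <| conv_assoc a.summable_norm b.summable_norm c.summable_norm
  one_mul a := lp.ext <| by
    ext n
    rw [coe_mul, conv_comm, coe_one, conv_single, sub_zero, mul_one]
  mul_one a := lp.ext <| by
    ext n
    rw [coe_mul, coe_one, conv_single, sub_zero, mul_one]
  left_distrib a b c := lp.ext <| conv_add a.summable_norm b.summable_norm c.summable_norm
  right_distrib a b c := lp.ext <| by
    simp only [coe_mul, lp.coeFn_add, conv_comm _ c.1]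
    exact conv_add c.summable_norm a.summable_norm b.summable_norm
  zero_mul a := lp.ext <| zero_conv _
  mul_zero a := lp.ext <| by rw [coe_mul, conv_comm, lp.coeFn_zero, zero_conv]
  mul_comm a b := lp.ext <| conv_comm _ _

instance : NormedCommRing (L1GroupAlgebra G) where
  __ := (inferInstance : NormedAddCommGroup (L1GroupAlgebra G))
  __ := (inferInstance : CommRing (L1GroupAlgebra G))
  norm_mul_le a b := by
    simpa only [norm_eq_tsum, coe_mul] using tsum_norm_conv_le a.summable_norm b.summable_norm

instance : NormOneClass (L1GroupAlgebra G) :=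
  ⟨norm_single 0⟩

instance : Algebra ℂ (L1GroupAlgebra G) :=
  Algebra.ofModule (fun z a b => lp.ext <| smul_conv z a b) fun z a b => lp.ext <| by
    simp only [coe_mul, lp.coeFn_smul]
    rw [conv_comm, smul_conv, conv_comm]

instance : NormedAlgebra ℂ (L1GroupAlgebra G) where
  norm_smul_le := norm_smul_le

theorem single_mul_single (g h : G) : single g * single h = single (g + h) := lp.ext <| by
  ext n
  rw [coe_mul, coe_single, coe_single, coe_single, conv_single, mul_one]
  simp only [Pi.single_apply, sub_eq_iff_eq_add]

def evalAddChar (ψ : AddChar G ℂ) (hψ : ∀ g, ‖ψ g‖ ≤ 1) : L1GroupAlgebra G →+* ℂ where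
  toFun a := ∑' g, a g * ψ g
  map_zero' := by simp
  map_one' := by simp [coe_one, Pi.single_apply]
  map_add' a b := by
    simp only [lp.coeFn_add, Pi.add_apply, add_mul]
    exact (a.summable_mul_addChar hψ).tsum_add (b.summable_mul_addChar hψ)
  map_mul' a b := by
    simp only [coe_mul]
    exact tsum_conv_mul_addChar a.summable_norm b.summable_norm ψ hψ

open WeakDual

variable (χ : characterSpace ℂ (L1GroupAlgebra G))

def addCharOf : AddChar G ℂ where
  toFun g := χ (single g)
  map_zero_eq_one' := map_one χ
  map_add_eq_mul' g h := by rw [← single_mul_single, map_mul]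

theorem norm_addCharOf_le (g : G) : ‖addCharOf χ g‖ ≤ 1 := by
  change ‖χ (single g)‖ ≤ 1
  simpa only [norm_single] using
    spectrum.norm_le_norm_of_mem (CharacterSpace.apply_mem_spectrum χ (single g))

theorem norm_addCharOf (g : G) : ‖addCharOf χ g‖ = 1 := by
  have hprod : ‖addCharOf χ g‖ * ‖addCharOf χ (-g)‖ = 1 := by
    rw [← norm_mul, ← AddChar.map_add_eq_mul, add_neg_cancel, AddChar.map_zero_eq_one, norm_one]
  nlinarith [norm_addCharOf_le χ g, norm_addCharOf_le χ (-g), norm_nonneg (addCharOf χ g)]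

theorem apply_eq_tsum (a : L1GroupAlgebra G) : χ a = ∑' g, a g * addCharOf χ g := by
  have hsum : HasSum (fun g => a g • single g) a := by
    simpa [single, ← lp.single_smul] using lp.hasSum_single (p := 1) (by norm_num) a
  simpa [addCharOf] using ((CharacterSpace.toCLM χ).hasSum hsum).tsum_eq.symm

theorem isUnit_of_forall_tsum_ne_zero (a : L1GroupAlgebra ℤ)
    (ha : ∀ θ : ℝ, ∑' n, a n * exp (I * n * θ) ≠ 0) : IsUnit a := by
  by_contra h
  obtain ⟨χ, hχ⟩ := CharacterSpace.exists_apply_eq_zero h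
  obtain ⟨θ, hθ⟩ := (addCharOf χ).exists_eq_expAddChar (norm_addCharOf χ 1)
  refine ha θ ?_
  rw [← hχ, apply_eq_tsum, hθ]
  rfl

end L1GroupAlgebra

end

/-- Wiener's lemma in this setting: if `φ ↦ f((1/2)tan(φ/2))` has an absolutely convergent
Fourier series and `f(x) ≠ 0` for all real `x`, then `φ ↦ 1/f((1/2)tan(φ/2))` also has an
absolutely convergent Fourier series. -/
theorem stmt_6 (f : ℝ → ℂ) (c : ℤ → ℂ) (hc : Summable fun n : ℤ => ‖c n‖)
    (hrep : ∀ φ : ℝ, f (1 / 2 * Real.tan (φ / 2)) =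
      ∑' n : ℤ, c n * Complex.exp (Complex.I * n * φ))
    (hne : ∀ x : ℝ, f x ≠ 0) :
    ∃ d : ℤ → ℂ, Summable (fun n : ℤ => ‖d n‖) ∧
      ∀ φ : ℝ, (f (1 / 2 * Real.tan (φ / 2)))⁻¹ =
        ∑' n : ℤ, d n * Complex.exp (Complex.I * n * φ) := by
  set a : L1GroupAlgebra ℤ := ⟨c, L1GroupAlgebra.memℓp_one hc⟩
  obtain ⟨b, hb⟩ := (a.isUnit_of_forall_tsum_ne_zero fun θ => hrep θ ▸ hne _).exists_right_inv
  refine ⟨b, b.summable_norm, fun φ => ?_⟩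
  have hab := congrArg
    (L1GroupAlgebra.evalAddChar (expAddChar φ) fun n => (norm_expAddChar φ n).le) hb
  rw [map_mul, map_one] at hab
  rw [hrep φ]
  exact inv_eq_of_mul_eq_one_right hab
end

section
/- For σ > 1/2, n ∈ ℤ, and the Dirichlet series of ζ, one has (1/(2π)) ∫_{-π}^{π} ζ(σ + (i/2)tan(φ/2)) e^{inφ} dφ = (1/π) ∫_0^π Σ_{k≥1} k^{-σ} cos((1/2)tan(φ/2)·log k − nφ) dφ, where the interchange of sum and integral is justified and the n-th term from k = 1 contributes (1/π)∫_0^π cos(nφ)dφ = δ_{n,0}. -/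
/-!
On the line `Re s = σ > 1` the zeta function is the absolutely convergent series
`∑ (k+1)^{-s}`, hence bounded by `ζ(σ)`, so the integrand
`g φ = ζ(σ + (i/2) tan(φ/2)) e^{inφ}` is integrable even though `tan(φ/2)` blows up at `±π`.
Since `ζ (conj s) = conj (ζ s)` and `tan` is odd, `g (-φ) = conj (g φ)`, so the integral over
`[-π, π]` is twice the integral of `Re g` over `[0, π]`, and `Re g` is termwise the cosine
series.
-/

open Complex intervalIntegral MeasureTheory ComplexConjugate

theorem integral_symm_eq_two_mul_integral_re {f : ℝ → ℂ} {a : ℝ}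
    (hf : ∀ x, f (-x) = conj (f x)) (hint : IntervalIntegrable f volume (-a) a) :
    ∫ x in -a..a, f x = ↑(2 * ∫ x in 0..a, (f x).re) := by
  have hneg : IntervalIntegrable f volume (-a) 0 :=
    hint.mono_set (by simp [Set.uIcc_subset_uIcc_iff_le, le_total])
  have hpos : IntervalIntegrable f volume 0 a :=
    hint.mono_set (by simp [Set.uIcc_subset_uIcc_iff_le, le_total])
  have hrefl : IntervalIntegrable (fun x ↦ f (-x)) volume 0 a := by
    simpa using ((IntervalIntegrable.iff_comp_neg).mp hneg).symm
  have hflip : ∫ x in -a..0, f x = ∫ x in 0..a, f (-x) := by simp [integral_comp_neg]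
  rw [← integral_add_adjacent_intervals hneg hpos, hflip, ← integral_add hrefl hpos,
    ← intervalIntegral.integral_const_mul, ← integral_ofReal]
  refine integral_congr fun x _ ↦ ?_
  rw [hf, add_comm, add_conj]

@[fun_prop]
theorem Real.measurable_tan : Measurable Real.tan := by
  rw [funext Real.tan_eq_sin_div_cos]
  fun_prop

theorem measurable_riemannZeta : Measurable riemannZeta :=
  measurable_of_continuousOn_compl_singleton 1 fun _ hs ↦
    (differentiableAt_riemannZeta hs).continuousAt.continuousWithinAt

theorem hasSum_riemannZeta {s : ℂ} (hs : 1 < s.re) :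
    HasSum (fun k : ℕ ↦ 1 / ((k : ℂ) + 1) ^ s) (riemannZeta s) := by
  rw [zeta_eq_tsum_one_div_nat_add_one_cpow hs]
  refine Summable.hasSum ?_
  exact_mod_cast (summable_nat_add_iff 1).mpr (Complex.summable_one_div_nat_cpow.mpr hs)

theorem norm_riemannZeta_le {s : ℂ} (hs : 1 < s.re) :
    ‖riemannZeta s‖ ≤ ∑' k : ℕ, ((k : ℝ) + 1) ^ (-s.re) := by
  have hnorm (k : ℕ) : ‖1 / ((k : ℂ) + 1) ^ s‖ = ((k : ℝ) + 1) ^ (-s.re) := by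
    rw [norm_div, norm_one, ← Nat.cast_succ, norm_natCast_cpow_of_pos k.succ_pos,
      Real.rpow_neg (by positivity), one_div, Nat.cast_succ]
  have hsum : Summable fun k : ℕ ↦ ((k : ℝ) + 1) ^ (-s.re) := by
    exact_mod_cast (summable_nat_add_iff 1).mpr (Real.summable_nat_rpow.mpr (neg_lt_neg hs))
  exact (hasSum_riemannZeta hs).norm_le_of_bounded hsum.hasSum fun k ↦ (hnorm k).le

theorem one_div_cpow_mul_exp (x : ℝ) (hx : 0 < x) (σ t θ : ℝ) :
    1 / (x : ℂ) ^ (σ + t * I : ℂ) * exp (θ * I) =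
      ↑(x ^ (-σ)) * exp (↑(θ - t * Real.log x) * I) := by
  rw [cpow_def_of_ne_zero (ofReal_ne_zero.mpr hx.ne'), ← ofReal_log hx.le,
    Real.rpow_def_of_pos hx, ofReal_exp, one_div, ← exp_neg, ← exp_add, ← exp_add]
  congr 1
  push_cast
  ring

theorem re_riemannZeta_mul_exp {σ : ℝ} (hσ : 1 < σ) (t θ : ℝ) :
    (riemannZeta (σ + t * I) * exp (θ * I)).re =
      ∑' k : ℕ, ((k : ℝ) + 1) ^ (-σ) * Real.cos (t * Real.log ((k : ℝ) + 1) - θ) := by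
  have hs : 1 < (σ + t * I : ℂ).re := by simpa using hσ
  rw [← ((hasSum_riemannZeta hs).mul_right (exp (θ * I))).tsum_eq, re_tsum]
  · refine tsum_congr fun k ↦ ?_
    have hk : (0 : ℝ) < k + 1 := by positivity
    rw [show ((k : ℂ) + 1) = ((k + 1 : ℝ) : ℂ) by push_cast; rfl, one_div_cpow_mul_exp _ hk,
      re_ofReal_mul, exp_ofReal_mul_I_re, ← Real.cos_neg, neg_sub]
  · exact ((hasSum_riemannZeta hs).mul_right _).summable

theorem riemannZeta_mul_exp_neg (σ t θ : ℝ) :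
    riemannZeta (σ + ↑(-t) * I) * exp (↑(-θ) * I) =
      conj (riemannZeta (σ + t * I) * exp (θ * I)) := by
  rw [map_mul, ← riemannZeta_conj, ← exp_conj]
  simp [conj_ofReal]

theorem intervalIntegrable_riemannZeta_mul_exp {σ : ℝ} (hσ : 1 < σ) {g h : ℝ → ℝ}
    (hg : Measurable g) (hh : Continuous h) (a b : ℝ) :
    IntervalIntegrable (fun x ↦ riemannZeta (σ + g x * I) * exp (h x * I)) volume a b := by
  refine IntervalIntegrable.mul_continuousOn ?_ (by fun_prop)
  refine (intervalIntegrable_const (c := ∑' k : ℕ, ((k : ℝ) + 1) ^ (-σ))).mono_fun'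
    (measurable_riemannZeta.comp (by fun_prop)).aestronglyMeasurable
    (Filter.Eventually.of_forall fun x ↦ ?_)
  simpa using norm_riemannZeta_le (s := σ + g x * I) (by simpa using hσ)

theorem integral_cos_int_mul (n : ℤ) :
    ∫ φ in (0 : ℝ)..Real.pi, Real.cos (n * φ) = if n = 0 then Real.pi else 0 := by
  split_ifs with hn
  · simp [hn]
  · have hc : (n : ℝ) ≠ 0 := Int.cast_ne_zero.mpr hn
    rw [intervalIntegral.integral_comp_mul_left (fun x ↦ Real.cos x) hc]
    simp [integral_cos, Real.sin_int_mul_pi]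

/-- For `σ > 1` (so that the Dirichlet series converges absolutely) and `n ∈ ℤ`,
`(1/(2π)) ∫_{-π}^{π} ζ(σ + (i/2)tan(φ/2)) e^{inφ} dφ
  = (1/π) ∫_0^π Σ_{k≥1} k^{-σ} cos((1/2)tan(φ/2)·log k − nφ) dφ`,
and the `k = 1` term contributes `(1/π)∫_0^π cos(nφ) dφ = δ_{n,0}`. -/
theorem stmt_11 (σ : ℝ) (hσ : 1 < σ) (n : ℤ) :
    (1 / (2 * Real.pi) : ℂ) *
        ∫ φ in (-Real.pi)..Real.pi,
          riemannZeta (σ + Complex.I / 2 * Real.tan (φ / 2)) *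
            Complex.exp (Complex.I * n * φ) =
      ((1 / Real.pi) * ∫ φ in (0 : ℝ)..Real.pi,
        ∑' k : ℕ, ((k + 1 : ℝ) ^ (-σ)) *
          Real.cos (1 / 2 * Real.tan (φ / 2) * Real.log (k + 1) - n * φ) : ℝ) ∧
    ((1 / Real.pi) * ∫ φ in (0 : ℝ)..Real.pi, Real.cos (n * φ)) =
      (if n = 0 then (1 : ℝ) else 0) := by
  refine ⟨?_, by rw [integral_cos_int_mul]; split_ifs <;> simp [Real.pi_ne_zero]⟩
  have hG (φ : ℝ) : riemannZeta (σ + I / 2 * Real.tan (φ / 2)) * exp (I * n * φ) =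
      riemannZeta (σ + ↑(1 / 2 * Real.tan (φ / 2)) * I) * exp (↑(n * φ) * I) := by
    congr 2 <;> push_cast <;> ring
  have hsymm (φ : ℝ) :
      riemannZeta (σ + ↑(1 / 2 * Real.tan (-φ / 2)) * I) * exp (↑(n * -φ) * I) =
        conj (riemannZeta (σ + ↑(1 / 2 * Real.tan (φ / 2)) * I) * exp (↑(n * φ) * I)) := by
    rw [neg_div, Real.tan_neg, mul_neg, mul_neg, riemannZeta_mul_exp_neg]
  simp_rw [hG]
  rw [integral_symm_eq_two_mul_integral_re hsymm
    (intervalIntegrable_riemannZeta_mul_exp hσ (by fun_prop) (by fun_prop) _ _)]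
  simp_rw [re_riemannZeta_mul_exp hσ]
  push_cast
  rw [← mul_assoc]
  congr 1
  field_simp
end
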